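/- Let n ≥ 1, let F be a C^∞ function on a connected open set Ω ⊆ ℝ^{n+1} on which U(F) is nowhere zero, let I ⊆ ℝ be an open interval containing F(Ω), and let ψ : I → ℝ be a C^∞ function with nowhere-vanishing derivative ψ′ (so ψ′ has constant sign ε ∈ {±1} on I). Then U(ψ∘F) is nowhere zero on Ω and the equiaffine normal fields satisfy 𝔑(ψ∘F)(x) = ε · 𝔑(F)(x) for every x ∈ Ω; that is, the operator F ↦ 𝔑(F) is invariant under orientation-preserving external reparameterizations. -/

import Mathlib

/-!
Write `c = ψ' ∘ F`. Then `∇(ψ ∘ F) = c ∇F` and `Hess(ψ ∘ F) = c Hess F + ψ''(F) ∇F ∇Fᵀ`.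
A rank-one perturbation `A + u vᵀ` does not change `adj(A) u`, so `N` and `U` get the factors
`c^{n+1}` and `c^{n+2}`. The rank-one term is also absorbed by `M_q`: `M₁(ψ ∘ F) = c M_q(F)` for
`q = c^{-(n+1)}`, so the independence of `σ` from `q` gives `σ(ψ ∘ F) = c⁻¹ σ(F)`. Finally
`μ(ψ ∘ F) = μ(F) + (ψ''/ψ')(F) ∇F` and `σ(F) ∇F = 0`, so both terms of `𝔑` get the factor
`|c| / c = ε`.
-/

open Matrix

noncomputable def pd1 {ι : Type*} [Fintype ι] [DecidableEq ι]
    (F : (ι → ℝ) → ℝ) (i : ι) (x : ι → ℝ) : ℝ :=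
  fderiv ℝ F x (Pi.single i 1)

noncomputable def gradv {ι : Type*} [Fintype ι] [DecidableEq ι]
    (F : (ι → ℝ) → ℝ) (x : ι → ℝ) : ι → ℝ :=
  fun i => pd1 F i x

noncomputable def hessM {ι : Type*} [Fintype ι] [DecidableEq ι]
    (F : (ι → ℝ) → ℝ) (x : ι → ℝ) : Matrix ι ι ℝ :=
  Matrix.of fun i j => pd1 (pd1 F j) i x

noncomputable def Hdet {ι : Type*} [Fintype ι] [DecidableEq ι]
    (F : (ι → ℝ) → ℝ) (x : ι → ℝ) : ℝ :=
  (hessM F x).det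

noncomputable def Nvec {ι : Type*} [Fintype ι] [DecidableEq ι]
    (F : (ι → ℝ) → ℝ) (x : ι → ℝ) : ι → ℝ :=
  (hessM F x).adjugate *ᵥ gradv F x

noncomputable def Uval {ι : Type*} [Fintype ι] [DecidableEq ι]
    (F : (ι → ℝ) → ℝ) (x : ι → ℝ) : ℝ :=
  gradv F x ⬝ᵥ Nvec F x

/-- The matrix `σ(F)` of the context, computed with the choice `q = 1` (it is
independent of the choice of nonvanishing `q`). -/
noncomputable def sigmaF {n : ℕ} (F : (Fin (n+1) → ℝ) → ℝ) (x : Fin (n+1) → ℝ) :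
    Matrix (Fin (n+1)) (Fin (n+1)) ℝ :=
  (hessM F x - ((Uval F x)⁻¹ * Hdet F x) • Matrix.vecMulVec (gradv F x) (gradv F x)
      + (Uval F x)⁻¹ • Matrix.vecMulVec (gradv F x) (gradv F x))⁻¹
    - (Uval F x)⁻¹ • Matrix.vecMulVec (Nvec F x) (Nvec F x)

noncomputable def muF (n : ℕ) (F : (Fin (n+1) → ℝ) → ℝ) (x : Fin (n+1) → ℝ) :
    Fin (n+1) → ℝ :=
  ((n : ℝ) + 2)⁻¹ • gradv (fun y => Real.log |Uval F y|) x

noncomputable def EANormal (n : ℕ) (F : (Fin (n+1) → ℝ) → ℝ) (x : Fin (n+1) → ℝ) :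
    Fin (n+1) → ℝ :=
  (-(|Uval F x| ^ ((1 : ℝ)/((n : ℝ)+2)) * (Uval F x)⁻¹)) • Nvec F x
    - (|Uval F x| ^ ((1 : ℝ)/((n : ℝ)+2))) • (sigmaF F x *ᵥ muF n F x)

namespace Matrix

variable {ι R : Type*} [Fintype ι] [DecidableEq ι] [CommRing R]

theorem det_updateCol_add_vecMulVec_self (A : Matrix ι ι R) (u v : ι → R) (i : ι) :
    ((A + vecMulVec u v).updateCol i u).det = (A.updateCol i u).det := by
  -- column operations: subtract `v j` times the new column `i` (which is `u`) from column `j`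
  have hfactor : (A + vecMulVec u v).updateCol i u
      = A.updateCol i u * (1 + vecMulVec (Pi.single i 1) (Function.update v i 0)) := by
    rw [Matrix.mul_add, Matrix.mul_one, mul_vecMulVec, mulVec_single_one]
    ext k j
    by_cases hj : j = i
    · subst hj; simp [vecMulVec_apply]
    · simp [hj, vecMulVec_apply]
  rw [hfactor, det_mul, vecMulVec_eq (ι := Unit), det_one_add_replicateCol_mul_replicateRow]
  simp

theorem adjugate_add_vecMulVec_mulVec (A : Matrix ι ι R) (u v : ι → R) :
    (A + vecMulVec u v).adjugate *ᵥ u = A.adjugate *ᵥ u := by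
  ext i
  simp only [← cramer_eq_adjugate_mulVec, cramer_apply, det_updateCol_add_vecMulVec_self]

theorem det_add_vecMulVec {K : Type*} [Field K] (A : Matrix ι ι K) (u v : ι → K) :
    (A + vecMulVec u v).det = A.det + v ⬝ᵥ (A.adjugate *ᵥ u) := by
  -- apply `B * adj B = det B` to `u`, using `adj B u = adj A u` for `B = A + u vᵀ`
  have key : (A + vecMulVec u v).det • u = (A.det + v ⬝ᵥ (A.adjugate *ᵥ u)) • u :=
    calc (A + vecMulVec u v).det • u
        = (A + vecMulVec u v) *ᵥ ((A + vecMulVec u v).adjugate *ᵥ u) := by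
          rw [mulVec_mulVec, mul_adjugate, smul_mulVec, one_mulVec]
      _ = (A + vecMulVec u v) *ᵥ (A.adjugate *ᵥ u) := by rw [adjugate_add_vecMulVec_mulVec]
      _ = (A.det + v ⬝ᵥ (A.adjugate *ᵥ u)) • u := by
          rw [add_mulVec, mulVec_mulVec, mul_adjugate, smul_mulVec, one_mulVec, vecMulVec_mulVec,
            op_smul_eq_smul, add_smul]
  have h : ((A + vecMulVec u v).det - (A.det + v ⬝ᵥ (A.adjugate *ᵥ u))) • u = 0 := by
    rw [sub_smul, key, sub_self]
  rcases smul_eq_zero.mp h with h | rfl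
  · exact sub_eq_zero.mp h
  · simp

theorem adjugate_smul_add_vecMulVec_mulVec {n : ℕ} (A : Matrix (Fin (n + 1)) (Fin (n + 1)) R)
    (g : Fin (n + 1) → R) (c b : R) :
    (c • A + b • vecMulVec g g).adjugate *ᵥ g = c ^ n • (A.adjugate *ᵥ g) := by
  rw [← vecMulVec_smul, adjugate_add_vecMulVec_mulVec, adjugate_smul, smul_mulVec,
    Fintype.card_fin, Nat.add_sub_cancel]

theorem det_smul_add_vecMulVec {K : Type*} [Field K] {n : ℕ}
    (A : Matrix (Fin (n + 1)) (Fin (n + 1)) K) (g : Fin (n + 1) → K) (c b : K) :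
    (c • A + b • vecMulVec g g).det
      = c ^ (n + 1) * A.det + b * c ^ n * (g ⬝ᵥ (A.adjugate *ᵥ g)) := by
  rw [← vecMulVec_smul, det_add_vecMulVec, det_smul, adjugate_smul, smul_mulVec, dotProduct_smul,
    Fintype.card_fin, Nat.add_sub_cancel, smul_dotProduct, smul_eq_mul, smul_eq_mul]
  ring

end Matrix

noncomputable section MqMatrix

variable {ι K : Type*} [Fintype ι] [DecidableEq ι] [Field K]

/-- For `A = Hess F`, `g = ∇F` this is `U(F)`. -/
def adjQuad (A : Matrix ι ι K) (g : ι → K) : K := g ⬝ᵥ (A.adjugate *ᵥ g)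

/-- `M_q` for `A = Hess F`, `g = ∇F`. -/
def mqMatrix (A : Matrix ι ι K) (g : ι → K) (q : K) : Matrix ι ι K :=
  A + ((q - A.det) / adjQuad A g) • vecMulVec g g

def sigmaMatrix (A : Matrix ι ι K) (g : ι → K) : Matrix ι ι K :=
  (mqMatrix A g 1)⁻¹ - (adjQuad A g)⁻¹ • vecMulVec (A.adjugate *ᵥ g) (A.adjugate *ᵥ g)

variable {A : Matrix ι ι K} {g : ι → K}

theorem det_mqMatrix (hU : adjQuad A g ≠ 0) (q : K) : (mqMatrix A g q).det = q := by
  rw [mqMatrix, ← smul_vecMulVec, det_add_vecMulVec, mulVec_smul, dotProduct_smul, smul_eq_mul,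
    ← adjQuad, div_mul_cancel₀ _ hU, add_sub_cancel]

theorem mqMatrix_mulVec_adjugate_mulVec (hU : adjQuad A g ≠ 0) (q : K) :
    mqMatrix A g q *ᵥ (A.adjugate *ᵥ g) = q • g := by
  rw [mqMatrix, add_mulVec, mulVec_mulVec, mul_adjugate, smul_mulVec, one_mulVec, smul_mulVec,
    vecMulVec_mulVec, op_smul_eq_smul, ← adjQuad, smul_smul, ← add_smul, div_mul_cancel₀ _ hU,
    add_sub_cancel]

theorem inv_mqMatrix_mulVec (hU : adjQuad A g ≠ 0) {q : K} (hq : q ≠ 0) :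
    (mqMatrix A g q)⁻¹ *ᵥ g = q⁻¹ • (A.adjugate *ᵥ g) := by
  have hdet : IsUnit (mqMatrix A g q).det := by rw [det_mqMatrix hU]; exact hq.isUnit
  calc (mqMatrix A g q)⁻¹ *ᵥ g
      = q⁻¹ • ((mqMatrix A g q)⁻¹ *ᵥ (mqMatrix A g q *ᵥ (A.adjugate *ᵥ g))) := by
        rw [mqMatrix_mulVec_adjugate_mulVec hU, mulVec_smul, inv_smul_smul₀ hq]
    _ = q⁻¹ • (A.adjugate *ᵥ g) := by rw [mulVec_mulVec, nonsing_inv_mul _ hdet, one_mulVec]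

theorem mqMatrix_isSymm (hA : A.IsSymm) (q : K) : (mqMatrix A g q).IsSymm := by
  rw [IsSymm, mqMatrix, transpose_add, transpose_smul, transpose_vecMulVec, hA.eq]

theorem inv_mqMatrix_sub_inv_mqMatrix (hA : A.IsSymm) (hU : adjQuad A g ≠ 0) {q q' : K}
    (hq : q ≠ 0) (hq' : q' ≠ 0) :
    (mqMatrix A g q)⁻¹ - (mqMatrix A g q')⁻¹
      = ((q⁻¹ - q'⁻¹) / adjQuad A g) • vecMulVec (A.adjugate *ᵥ g) (A.adjugate *ᵥ g) := by
  have hunit : ∀ {p : K}, p ≠ 0 → IsUnit (mqMatrix A g p).det := fun hp => by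
    rw [det_mqMatrix hU]; exact hp.isUnit
  have hrow : g ᵥ* (mqMatrix A g q')⁻¹ = q'⁻¹ • (A.adjugate *ᵥ g) := by
    rw [← (mqMatrix_isSymm hA q').inv.eq, vecMul_transpose, inv_mqMatrix_mulVec hU hq']
  have hdiff : mqMatrix A g q' - mqMatrix A g q = ((q' - q) / adjQuad A g) • vecMulVec g g := by
    rw [mqMatrix, mqMatrix, add_sub_add_left_eq_sub, ← sub_smul]
    ring_nf
  calc (mqMatrix A g q)⁻¹ - (mqMatrix A g q')⁻¹
      = (mqMatrix A g q)⁻¹ * (mqMatrix A g q' - mqMatrix A g q) * (mqMatrix A g q')⁻¹ := by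
        rw [Matrix.mul_sub, Matrix.sub_mul, Matrix.mul_assoc, mul_nonsing_inv _ (hunit hq'),
          Matrix.mul_one, nonsing_inv_mul _ (hunit hq), Matrix.one_mul]
    _ = ((q' - q) / adjQuad A g) •
          vecMulVec ((mqMatrix A g q)⁻¹ *ᵥ g) (g ᵥ* (mqMatrix A g q')⁻¹) := by
        rw [hdiff, Matrix.mul_smul, Matrix.smul_mul, mul_vecMulVec, vecMulVec_mul]
    _ = ((q⁻¹ - q'⁻¹) / adjQuad A g) • vecMulVec (A.adjugate *ᵥ g) (A.adjugate *ᵥ g) := by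
        rw [inv_mqMatrix_mulVec hU hq, hrow, smul_vecMulVec, vecMulVec_smul, smul_smul, smul_smul]
        congr 1
        field_simp

theorem sigmaMatrix_eq_inv_mqMatrix_sub (hA : A.IsSymm) (hU : adjQuad A g ≠ 0) {q : K}
    (hq : q ≠ 0) :
    sigmaMatrix A g = (mqMatrix A g q)⁻¹
      - (q⁻¹ * (adjQuad A g)⁻¹) • vecMulVec (A.adjugate *ᵥ g) (A.adjugate *ᵥ g) := by
  rw [sigmaMatrix, ← sub_add_cancel (mqMatrix A g 1)⁻¹ (mqMatrix A g q)⁻¹,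
    inv_mqMatrix_sub_inv_mqMatrix hA hU one_ne_zero hq]
  module

theorem sigmaMatrix_mulVec_self (hU : adjQuad A g ≠ 0) : sigmaMatrix A g *ᵥ g = 0 := by
  rw [sigmaMatrix, sub_mulVec, inv_mqMatrix_mulVec hU one_ne_zero, smul_mulVec, vecMulVec_mulVec,
    op_smul_eq_smul, dotProduct_comm, ← adjQuad, smul_smul, inv_mul_cancel₀ hU, inv_one, sub_self]

end MqMatrix

section Rescaling

variable {K : Type*} [Field K] {n : ℕ} {A : Matrix (Fin (n + 1)) (Fin (n + 1)) K}
  {g : Fin (n + 1) → K}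

theorem adjugate_smul_add_vecMulVec_mulVec_smul (c b : K) :
    (c • A + b • vecMulVec g g).adjugate *ᵥ (c • g) = c ^ (n + 1) • (A.adjugate *ᵥ g) := by
  rw [mulVec_smul, adjugate_smul_add_vecMulVec_mulVec, smul_smul, pow_succ']

theorem adjQuad_smul_add_vecMulVec (c b : K) :
    adjQuad (c • A + b • vecMulVec g g) (c • g) = c ^ (n + 2) * adjQuad A g := by
  rw [adjQuad, adjugate_smul_add_vecMulVec_mulVec_smul, smul_dotProduct, dotProduct_smul,
    smul_eq_mul, smul_eq_mul, adjQuad]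
  ring

theorem mqMatrix_smul_add_vecMulVec {c : K} (hc : c ≠ 0) (b : K) (hU : adjQuad A g ≠ 0) :
    mqMatrix (c • A + b • vecMulVec g g) (c • g) 1 = c • mqMatrix A g (c ^ (n + 1))⁻¹ := by
  have hscalar : b + (1 - (c ^ (n + 1) * A.det + b * c ^ n * adjQuad A g))
      / (c ^ (n + 2) * adjQuad A g) * (c * c) = c * (((c ^ (n + 1))⁻¹ - A.det) / adjQuad A g) := by
    field_simp
    ring
  rw [mqMatrix, mqMatrix, adjQuad_smul_add_vecMulVec, det_smul_add_vecMulVec, ← adjQuad,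
    smul_vecMulVec, vecMulVec_smul]
  linear_combination (norm := module) hscalar • vecMulVec g g

theorem sigmaMatrix_smul_add_vecMulVec (hA : A.IsSymm) {c : K} (hc : c ≠ 0) (b : K)
    (hU : adjQuad A g ≠ 0) :
    sigmaMatrix (c • A + b • vecMulVec g g) (c • g) = c⁻¹ • sigmaMatrix A g := by
  have hq : (c ^ (n + 1))⁻¹ ≠ 0 := inv_ne_zero (pow_ne_zero _ hc)
  have hdet : IsUnit (mqMatrix A g (c ^ (n + 1))⁻¹).det := by
    rw [det_mqMatrix hU]; exact hq.isUnit
  have hinv : (c • mqMatrix A g (c ^ (n + 1))⁻¹)⁻¹ = c⁻¹ • (mqMatrix A g (c ^ (n + 1))⁻¹)⁻¹ := by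
    have h := inv_smul' _ (Units.mk0 c hc) hdet
    rwa [Units.smul_def, Units.smul_def, Units.val_inv_eq_inv_val, Units.val_mk0] at h
  rw [sigmaMatrix, mqMatrix_smul_add_vecMulVec hc b hU, hinv,
    adjugate_smul_add_vecMulVec_mulVec_smul, adjQuad_smul_add_vecMulVec,
    sigmaMatrix_eq_inv_mqMatrix_sub hA hU hq, smul_vecMulVec, vecMulVec_smul]
  have hscalar : c⁻¹ * ((c ^ (n + 1))⁻¹⁻¹ * (adjQuad A g)⁻¹)
      = (c ^ (n + 2) * adjQuad A g)⁻¹ * (c ^ (n + 1) * c ^ (n + 1)) := by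
    field_simp
    ring
  linear_combination (norm := module) hscalar • vecMulVec (A.adjugate *ᵥ g) (A.adjugate *ᵥ g)

end Rescaling

open Filter Topology

section Calculus

variable {ι : Type*} [Fintype ι] [DecidableEq ι] {F G : (ι → ℝ) → ℝ} {x : ι → ℝ}

theorem HasFDerivAt.gradv_eq {F' : (ι → ℝ) →L[ℝ] ℝ} (h : HasFDerivAt F F' x) :
    gradv F x = fun i => F' (Pi.single i 1) :=
  funext fun i => by rw [gradv, pd1, h.fderiv]

theorem Filter.EventuallyEq.gradv_eq (h : F =ᶠ[𝓝 x] G) : gradv F x = gradv G x :=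
  funext fun i => by rw [gradv, gradv, pd1, pd1, h.fderiv_eq]

theorem gradv_add (hF : DifferentiableAt ℝ F x) (hG : DifferentiableAt ℝ G x) :
    gradv (fun y => F y + G y) x = gradv F x + gradv G x := by
  rw [(hF.hasFDerivAt.fun_add hG.hasFDerivAt).gradv_eq, hF.hasFDerivAt.gradv_eq,
    hG.hasFDerivAt.gradv_eq]
  rfl

theorem gradv_const_mul (c : ℝ) (hF : DifferentiableAt ℝ F x) :
    gradv (fun y => c * F y) x = c • gradv F x := by
  rw [(hF.hasFDerivAt.const_mul c).gradv_eq, hF.hasFDerivAt.gradv_eq]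
  rfl

theorem gradv_comp {φ : ℝ → ℝ} {φ' : ℝ} (hφ : HasDerivAt φ φ' (F x))
    (hF : DifferentiableAt ℝ F x) : gradv (φ ∘ F) x = φ' • gradv F x := by
  rw [(hφ.comp_hasFDerivAt x hF.hasFDerivAt).gradv_eq, hF.hasFDerivAt.gradv_eq]
  ext i
  simp

theorem ContDiffAt.pd1 {m n : WithTop ℕ∞} (hF : ContDiffAt ℝ n F x) (hmn : m + 1 ≤ n) (i : ι) :
    ContDiffAt ℝ m (pd1 F i) x :=
  (hF.fderiv_right hmn).clm_apply contDiffAt_const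

theorem pd1_pd1_eq_fderiv_fderiv (hF : DifferentiableAt ℝ (fderiv ℝ F) x) (i j : ι) :
    pd1 (pd1 F j) i x = fderiv ℝ (fderiv ℝ F) x (Pi.single i 1) (Pi.single j 1) := by
  rw [pd1, show pd1 F j = fun y => fderiv ℝ F y (Pi.single j 1) from rfl,
    fderiv_clm_apply hF (differentiableAt_const _)]
  simp

theorem hessM_isSymm (hF : ContDiffAt ℝ 2 F x) : (hessM F x).IsSymm := by
  have hdiff : DifferentiableAt ℝ (fderiv ℝ F) x :=
    (hF.fderiv_right (m := 1) (by norm_num)).differentiableAt one_ne_zero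
  ext i j
  simp only [transpose_apply, hessM, of_apply, pd1_pd1_eq_fderiv_fderiv hdiff]
  exact hF.isSymmSndFDerivAt (by simp) _ _

theorem ContDiffAt.hasDerivAt_deriv {ψ : ℝ → ℝ} {t : ℝ} (hψ : ContDiffAt ℝ 2 ψ t) :
    HasDerivAt (deriv ψ) (deriv (deriv ψ) t) t :=
  ((hψ.derivWithin (m := 1) (by norm_num)).differentiableAt one_ne_zero).hasDerivAt

theorem gradv_comp_of_contDiffAt {ψ : ℝ → ℝ} (hF : ContDiffAt ℝ 2 F x)
    (hψ : ContDiffAt ℝ 2 ψ (F x)) : gradv (ψ ∘ F) x = deriv ψ (F x) • gradv F x :=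
  gradv_comp (hψ.differentiableAt (by simp)).hasDerivAt (hF.differentiableAt (by simp))

theorem hessM_comp {ψ : ℝ → ℝ} (hF : ContDiffAt ℝ 2 F x) (hψ : ContDiffAt ℝ 2 ψ (F x)) :
    hessM (ψ ∘ F) x = deriv ψ (F x) • hessM F x
      + deriv (deriv ψ) (F x) • vecMulVec (gradv F x) (gradv F x) := by
  have hgrad : ∀ᶠ y in 𝓝 x, gradv (ψ ∘ F) y = deriv ψ (F y) • gradv F y := by
    filter_upwards [hF.eventually (by simp), hF.continuousAt.eventually (hψ.eventually (by simp))]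
      with y hFy hψy
    exact gradv_comp_of_contDiffAt hFy hψy
  have hψ'F : HasFDerivAt (fun y => deriv ψ (F y)) (deriv (deriv ψ) (F x) • fderiv ℝ F x) x :=
    hψ.hasDerivAt_deriv.comp_hasFDerivAt x (hF.differentiableAt (by simp)).hasFDerivAt
  ext i j
  have hj : pd1 (ψ ∘ F) j =ᶠ[𝓝 x] fun y => deriv ψ (F y) * pd1 F j y :=
    hgrad.mono fun y hy => congrFun hy j
  have hFj := ((hF.pd1 (m := 1) (by norm_num) j).differentiableAt one_ne_zero).hasFDerivAt
  calc hessM (ψ ∘ F) x i j = gradv (fun y => deriv ψ (F y) * pd1 F j y) x i :=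
        congrFun hj.gradv_eq i
    _ = (deriv ψ (F x) • fderiv ℝ (pd1 F j) x
          + pd1 F j x • deriv (deriv ψ) (F x) • fderiv ℝ F x) (Pi.single i 1) :=
        congrFun (hψ'F.fun_mul hFj).gradv_eq i
    _ = _ := by
        simp only [hessM, Matrix.add_apply, Matrix.smul_apply, of_apply, vecMulVec_apply,
          _root_.add_apply, _root_.smul_apply, smul_eq_mul, gradv, pd1]
        ring

end Calculus

section Smoothness

variable {E κ : Type*} [NormedAddCommGroup E] [NormedSpace ℝ E] [Fintype κ] [DecidableEq κ]
  {M : E → Matrix κ κ ℝ} {x : E} {m : WithTop ℕ∞}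

theorem ContDiffAt.matrix_det (h : ∀ i j, ContDiffAt ℝ m (fun y => M y i j) x) :
    ContDiffAt ℝ m (fun y => (M y).det) x := by
  simp only [det_apply, Units.smul_def, zsmul_eq_mul]
  exact ContDiffAt.sum fun σ _ => contDiffAt_const.mul (contDiffAt_prod fun i _ => h _ _)

theorem ContDiffAt.matrix_adjugate (h : ∀ i j, ContDiffAt ℝ m (fun y => M y i j) x) (i j : κ) :
    ContDiffAt ℝ m (fun y => (M y).adjugate i j) x := by
  simp only [adjugate_apply]
  refine ContDiffAt.matrix_det fun k l => ?_
  by_cases hk : k = j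
  · simp only [hk, updateRow_self]
    exact contDiffAt_const
  · simp only [updateRow_ne hk]
    exact h k l

end Smoothness

theorem differentiableAt_Uval {ι : Type*} [Fintype ι] [DecidableEq ι] {F : (ι → ℝ) → ℝ}
    {x : ι → ℝ} (hF : ContDiffAt ℝ 3 F x) : DifferentiableAt ℝ (Uval F) x := by
  have hgrad : ∀ i, ContDiffAt ℝ 1 (pd1 F i) x := fun i => hF.pd1 (by norm_num) i
  have hhess : ∀ i j, ContDiffAt ℝ 1 (fun y => hessM F y i j) x :=
    fun i j => (hF.pd1 (m := 2) (by norm_num) j).pd1 (by norm_num) i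
  have h : ContDiffAt ℝ 1 (Uval F) x := by
    simp only [show Uval F = fun y => ∑ i, pd1 F i y * ∑ j, (hessM F y).adjugate i j * pd1 F j y
      from rfl]
    exact ContDiffAt.sum fun i _ => (hgrad i).mul
      (ContDiffAt.sum fun j _ => (ContDiffAt.matrix_adjugate hhess i j).mul (hgrad j))
  exact h.differentiableAt one_ne_zero

section Reparametrization

variable {n : ℕ} {F : (Fin (n + 1) → ℝ) → ℝ} {ψ : ℝ → ℝ} {x : Fin (n + 1) → ℝ}

theorem Uval_eq_adjQuad : Uval F x = adjQuad (hessM F x) (gradv F x) := rfl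

theorem sigmaF_eq_sigmaMatrix : sigmaF F x = sigmaMatrix (hessM F x) (gradv F x) := by
  rw [sigmaF, sigmaMatrix, mqMatrix, ← Uval_eq_adjQuad, Hdet]
  congr 2
  module

theorem Nvec_comp (hF : ContDiffAt ℝ 2 F x) (hψ : ContDiffAt ℝ 2 ψ (F x)) :
    Nvec (ψ ∘ F) x = deriv ψ (F x) ^ (n + 1) • Nvec F x := by
  rw [Nvec, hessM_comp hF hψ, gradv_comp_of_contDiffAt hF hψ,
    adjugate_smul_add_vecMulVec_mulVec_smul, Nvec]

theorem Uval_comp (hF : ContDiffAt ℝ 2 F x) (hψ : ContDiffAt ℝ 2 ψ (F x)) :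
    Uval (ψ ∘ F) x = deriv ψ (F x) ^ (n + 2) * Uval F x := by
  rw [Uval_eq_adjQuad, hessM_comp hF hψ, gradv_comp_of_contDiffAt hF hψ,
    adjQuad_smul_add_vecMulVec, Uval_eq_adjQuad]

theorem sigmaF_comp (hF : ContDiffAt ℝ 2 F x) (hψ : ContDiffAt ℝ 2 ψ (F x))
    (hψ' : deriv ψ (F x) ≠ 0) (hU : Uval F x ≠ 0) :
    sigmaF (ψ ∘ F) x = (deriv ψ (F x))⁻¹ • sigmaF F x := by
  rw [sigmaF_eq_sigmaMatrix, hessM_comp hF hψ, gradv_comp_of_contDiffAt hF hψ,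
    sigmaMatrix_smul_add_vecMulVec (hessM_isSymm hF) hψ' _ hU, sigmaF_eq_sigmaMatrix]

theorem sigmaF_mulVec_gradv (hU : Uval F x ≠ 0) : sigmaF F x *ᵥ gradv F x = 0 := by
  rw [sigmaF_eq_sigmaMatrix]
  exact sigmaMatrix_mulVec_self hU

theorem muF_comp (hF : ContDiffAt ℝ 3 F x) (hψ : ContDiffAt ℝ 2 ψ (F x))
    (hψ' : deriv ψ (F x) ≠ 0) (hU : Uval F x ≠ 0) :
    muF n (ψ ∘ F) x = (deriv (deriv ψ) (F x) / deriv ψ (F x)) • gradv F x + muF n F x := by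
  have hF2 : ContDiffAt ℝ 2 F x := hF.of_le (by norm_num)
  have hψ'' := hψ.hasDerivAt_deriv
  have hUdiff := differentiableAt_Uval hF
  have hlogψ' : HasDerivAt (fun t => Real.log (deriv ψ t))
      (deriv (deriv ψ) (F x) / deriv ψ (F x)) (F x) := hψ''.log hψ'
  have hev : (fun y => Real.log (Uval (ψ ∘ F) y)) =ᶠ[𝓝 x]
      fun y => ((n : ℝ) + 2) * Real.log (deriv ψ (F y)) + Real.log (Uval F y) := by
    filter_upwards [hF2.eventually (by simp), hF2.continuousAt.eventually (hψ.eventually (by simp)),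
      (hψ''.continuousAt.comp hF2.continuousAt).eventually_ne hψ',
      hUdiff.continuousAt.eventually_ne hU] with y hFy hψy hψ'y hUy
    rw [Uval_comp hFy hψy, Real.log_mul (pow_ne_zero _ (id hψ'y : deriv ψ (F y) ≠ 0)) hUy,
      Real.log_pow]
    push_cast
    rfl
  have hFdiff : DifferentiableAt ℝ F x := hF2.differentiableAt (by simp)
  have hlogψ'F : DifferentiableAt ℝ (fun y => Real.log (deriv ψ (F y))) x :=
    (hlogψ'.comp_hasFDerivAt x hFdiff.hasFDerivAt).differentiableAt
  have hgrad : gradv (fun y => Real.log (deriv ψ (F y))) x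
      = (deriv (deriv ψ) (F x) / deriv ψ (F x)) • gradv F x := gradv_comp hlogψ' hFdiff
  simp only [muF, Real.log_abs]
  rw [hev.gradv_eq, gradv_add (hlogψ'F.const_mul _) (hUdiff.log hU), gradv_const_mul _ hlogψ'F,
    hgrad, smul_add, smul_smul, inv_mul_cancel₀ (by positivity), one_smul]

end Reparametrization

theorem abs_pow_mul_rpow_inv_natCast {k : ℕ} (hk : k ≠ 0) (c u : ℝ) :
    |c ^ k * u| ^ (k⁻¹ : ℝ) = |c| * |u| ^ (k⁻¹ : ℝ) := by
  rw [abs_mul, abs_pow, Real.mul_rpow (by positivity) (abs_nonneg _),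
    Real.pow_rpow_inv_natCast (abs_nonneg _) hk]

theorem abs_div_self_eq_of_pos_mul {ε c : ℝ} (hε : ε = 1 ∨ ε = -1) (h : 0 < ε * c) :
    |c| / c = ε := by
  rcases hε with rfl | rfl
  · rw [one_mul] at h
    rw [abs_of_pos h, div_self h.ne']
  · have hc : c < 0 := by linarith
    rw [abs_of_neg hc, neg_div, div_self hc.ne]

theorem EANormal_comp {n : ℕ} {F : (Fin (n + 1) → ℝ) → ℝ} {ψ : ℝ → ℝ} {x : Fin (n + 1) → ℝ}
    (hF : ContDiffAt ℝ 3 F x) (hψ : ContDiffAt ℝ 2 ψ (F x)) (hψ' : deriv ψ (F x) ≠ 0)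
    (hU : Uval F x ≠ 0) :
    EANormal n (ψ ∘ F) x = (|deriv ψ (F x)| / deriv ψ (F x)) • EANormal n F x := by
  have hF2 : ContDiffAt ℝ 2 F x := hF.of_le (by norm_num)
  have hroot : |Uval (ψ ∘ F) x| ^ ((1 : ℝ) / ((n : ℝ) + 2))
      = |deriv ψ (F x)| * |Uval F x| ^ ((1 : ℝ) / ((n : ℝ) + 2)) := by
    rw [Uval_comp hF2 hψ, show (1 : ℝ) / ((n : ℝ) + 2) = ((n + 2 : ℕ) : ℝ)⁻¹ by push_cast; ring,
      abs_pow_mul_rpow_inv_natCast (by omega)]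
  have hσμ : sigmaF (ψ ∘ F) x *ᵥ muF n (ψ ∘ F) x
      = (deriv ψ (F x))⁻¹ • (sigmaF F x *ᵥ muF n F x) := by
    rw [sigmaF_comp hF2 hψ hψ' hU, muF_comp hF hψ hψ' hU, smul_mulVec, mulVec_add, mulVec_smul,
      sigmaF_mulVec_gradv hU, smul_zero, zero_add]
  rw [EANormal, EANormal, hroot, hσμ, Uval_comp hF2 hψ, Nvec_comp hF2 hψ]
  match_scalars
  · field_simp
    ring
  · field_simp

theorem stmt7_general (n : ℕ)
    (Ω : Set (Fin (n+1) → ℝ)) (hΩ : IsOpen Ω)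
    (F : (Fin (n+1) → ℝ) → ℝ) (hF : ContDiffOn ℝ (⊤ : ℕ∞) F Ω)
    (hU : ∀ x ∈ Ω, Uval F x ≠ 0)
    (I : Set ℝ) (hIopen : IsOpen I) (hFI : F '' Ω ⊆ I)
    (ψ : ℝ → ℝ) (hψ : ContDiffOn ℝ (⊤ : ℕ∞) ψ I)
    (ε : ℝ) (hε : ε = 1 ∨ ε = -1)
    (hψ' : ∀ t ∈ I, 0 < ε * deriv ψ t) :
    (∀ x ∈ Ω, Uval (ψ ∘ F) x ≠ 0) ∧
    (∀ x ∈ Ω, EANormal n (ψ ∘ F) x = ε • EANormal n F x) := by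
  have hFI' : ∀ x ∈ Ω, F x ∈ I := fun x hx => hFI ⟨x, hx, rfl⟩
  have hFx : ∀ x ∈ Ω, ContDiffAt ℝ 3 F x := fun x hx =>
    (hF.contDiffAt (hΩ.mem_nhds hx)).of_le (WithTop.coe_le_coe.mpr le_top)
  have hψx : ∀ x ∈ Ω, ContDiffAt ℝ 2 ψ (F x) := fun x hx =>
    (hψ.contDiffAt (hIopen.mem_nhds (hFI' x hx))).of_le (WithTop.coe_le_coe.mpr le_top)
  have hψ'x : ∀ x ∈ Ω, deriv ψ (F x) ≠ 0 := fun x hx h => by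
    simpa [h] using hψ' _ (hFI' x hx)
  refine ⟨fun x hx => ?_, fun x hx => ?_⟩
  · rw [Uval_comp ((hFx x hx).of_le (by norm_num)) (hψx x hx)]
    exact mul_ne_zero (pow_ne_zero _ (hψ'x x hx)) (hU x hx)
  · rw [EANormal_comp (hFx x hx) (hψx x hx) (hψ'x x hx) (hU x hx),
      abs_div_self_eq_of_pos_mul hε (hψ' _ (hFI' x hx))]

/-- invariance of the equiaffine normal operator `F ↦ 𝔑(F)` under
orientation-preserving external reparameterizations: `𝔑(ψ∘F) = ε·𝔑(F)` where `ε = ±1`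
is the constant sign of `ψ'`. -/
theorem stmt7 (n : ℕ) (hn : 1 ≤ n)
    (Ω : Set (Fin (n+1) → ℝ)) (hΩ : IsOpen Ω) (hΩconn : IsConnected Ω)
    (F : (Fin (n+1) → ℝ) → ℝ) (hF : ContDiffOn ℝ (⊤ : ℕ∞) F Ω)
    (hU : ∀ x ∈ Ω, Uval F x ≠ 0)
    (I : Set ℝ) (hIopen : IsOpen I) (hIconn : I.OrdConnected) (hFI : F '' Ω ⊆ I)
    (ψ : ℝ → ℝ) (hψ : ContDiffOn ℝ (⊤ : ℕ∞) ψ I)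
    (ε : ℝ) (hε : ε = 1 ∨ ε = -1)
    (hψ' : ∀ t ∈ I, 0 < ε * deriv ψ t) :
    (∀ x ∈ Ω, Uval (ψ ∘ F) x ≠ 0) ∧
    (∀ x ∈ Ω, EANormal n (ψ ∘ F) x = ε • EANormal n F x) :=
  stmt7_general n Ω hΩ F hF hU I hIopen hFI ψ hψ ε hε hψ'
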